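/- arXiv:0910.5594 — 5 statements merged into one kernel-verified Lean document; each statement's English description precedes it below -/
import Mathlib

section
/- For all integers m ≥ 1 and 0 ≤ k ≤ m, the quantity a_{m,k} := (2m-k)!/(2^{2m-k} · m! · (m-k)!) satisfies a_{m,k} ≤ C · e^{-k²/(4(2m-k))} / √(2m-k) for some absolute constant C > 0 (independent of m and k). -/
/-!
The ratio `a_{m,k+1} / a_{m,k} = 2(m-k)/(2m-k) = 1 - k/(2m-k)` is at most `exp(-k/(2m))`,
so multiplying these ratios gives `a_{m,k} ≤ a_{m,0} · exp(-k(k-1)/(4m))`. The starting value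
`a_{m,0} = C(2m,m)/4^m` is at most `1/√(3m+1)`, and both `3m+1 ≥ 2m-k` and
`k(k-1)/(4m) ≥ k²/(4(2m-k)) - 1` hold for `k ≤ m`, which gives the bound with `C = e`.
-/

open Real

/-- The paper's `a_{m,k}`. -/
noncomputable def binomHalfTerm (m k : ℕ) : ℝ :=
  ((2 * m - k).factorial : ℝ) / (2 ^ (2 * m - k) * m.factorial * (m - k).factorial)

theorem Nat.centralBinom_sq_mul_le (n : ℕ) : n.centralBinom ^ 2 * (3 * n + 1) ≤ 16 ^ n := by
  induction n with
  | zero => simp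
  | succ n ih =>
    have hrec := Nat.succ_mul_centralBinom_succ n
    have hpoly : (2 * n + 1) ^ 2 * (3 * n + 4) ≤ 4 * (n + 1) ^ 2 * (3 * n + 1) := by
      ring_nf; omega
    have key : ((n + 1) * (n + 1).centralBinom) ^ 2 * (3 * (n + 1) + 1)
        ≤ (n + 1) ^ 2 * 16 ^ (n + 1) := by
      rw [hrec]
      calc (2 * (2 * n + 1) * n.centralBinom) ^ 2 * (3 * (n + 1) + 1)
          = 4 * ((2 * n + 1) ^ 2 * (3 * n + 4)) * n.centralBinom ^ 2 := by ring
        _ ≤ 4 * (4 * (n + 1) ^ 2 * (3 * n + 1)) * n.centralBinom ^ 2 := by gcongr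
        _ = 16 * (n + 1) ^ 2 * (n.centralBinom ^ 2 * (3 * n + 1)) := by ring
        _ ≤ 16 * (n + 1) ^ 2 * 16 ^ n := by gcongr
        _ = (n + 1) ^ 2 * 16 ^ (n + 1) := by ring
    rw [mul_pow, mul_assoc] at key
    exact Nat.le_of_mul_le_mul_left key (by positivity)

theorem binomHalfTerm_zero (m : ℕ) : binomHalfTerm m 0 = m.centralBinom / 4 ^ m := by
  have hfac : ((2 * m).factorial : ℝ) = m.centralBinom * m.factorial * m.factorial := by
    have h := Nat.choose_mul_factorial_mul_factorial (by omega : m ≤ 2 * m)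
    rw [show 2 * m - m = m by omega] at h
    exact_mod_cast h.symm
  rw [binomHalfTerm, Nat.sub_zero, Nat.sub_zero, hfac, pow_mul]
  field_simp
  norm_num

theorem binomHalfTerm_zero_le (m : ℕ) : binomHalfTerm m 0 ≤ 1 / √(3 * m + 1) := by
  rw [binomHalfTerm_zero, div_le_div_iff₀ (by positivity) (by positivity), one_mul]
  have h : ((m.centralBinom : ℝ) * √(3 * m + 1)) ^ 2 ≤ (4 ^ m) ^ 2 := by
    rw [mul_pow, sq_sqrt (by positivity), ← pow_mul, pow_mul']
    norm_num
    exact_mod_cast Nat.centralBinom_sq_mul_le m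
  exact le_of_sq_le_sq h (by positivity)

theorem binomHalfTerm_succ_mul {m k : ℕ} (hk : k < m) :
    binomHalfTerm m (k + 1) * (2 * m - k) = binomHalfTerm m k * (2 * (m - k)) := by
  obtain ⟨j, rfl⟩ : ∃ j, m = k + 1 + j := ⟨m - (k + 1), by omega⟩
  rw [binomHalfTerm, binomHalfTerm, show 2 * (k + 1 + j) - k = (k + 2 * j + 1) + 1 by omega,
    show 2 * (k + 1 + j) - (k + 1) = k + 2 * j + 1 by omega,
    show k + 1 + j - k = j + 1 by omega, show k + 1 + j - (k + 1) = j by omega,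
    Nat.factorial_succ (k + 2 * j + 1), Nat.factorial_succ j, pow_succ]
  push_cast
  field_simp
  ring

theorem binomHalfTerm_succ_le {m k : ℕ} (hk : k < m) :
    binomHalfTerm m (k + 1) ≤ binomHalfTerm m k * exp (-k / (2 * m)) := by
  have hkm : (k : ℝ) < m := by exact_mod_cast hk
  have hpos : (0 : ℝ) < 2 * m - k := by linarith
  have hratio : 2 * ((m : ℝ) - k) / (2 * m - k) ≤ exp (-k / (2 * m)) :=
    calc 2 * ((m : ℝ) - k) / (2 * m - k) = -k / (2 * m - k) + 1 := by field_simp; ring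
      _ ≤ exp (-k / (2 * m - k)) := add_one_le_exp _
      _ ≤ exp (-k / (2 * m)) := by
        rw [exp_le_exp, neg_div, neg_div, neg_le_neg_iff]
        exact div_le_div_of_nonneg_left k.cast_nonneg hpos (by linarith)
  calc binomHalfTerm m (k + 1) = binomHalfTerm m k * (2 * (m - k) / (2 * m - k)) := by
        rw [mul_div_assoc', eq_div_iff hpos.ne', binomHalfTerm_succ_mul hk]
    _ ≤ binomHalfTerm m k * exp (-k / (2 * m)) := by
        gcongr
        unfold binomHalfTerm
        positivity

theorem le_mul_exp_of_succ_le_mul_exp {x : ℕ → ℝ} {c : ℝ} {n : ℕ}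
    (h : ∀ k < n, x (k + 1) ≤ x k * exp (-k / c)) :
    ∀ k ≤ n, x k ≤ x 0 * exp (-(k * (k - 1)) / (2 * c)) := by
  intro k hk
  induction k with
  | zero => simp
  | succ k ih =>
    calc x (k + 1) ≤ x k * exp (-k / c) := h k hk
      _ ≤ x 0 * exp (-(k * (k - 1)) / (2 * c)) * exp (-k / c) := by
        gcongr
        exact ih (by omega)
      _ = x 0 * exp (-((k + 1 : ℕ) * ((k + 1 : ℕ) - 1)) / (2 * c)) := by
        rw [mul_assoc, ← exp_add]
        push_cast
        ring_nf

theorem binomHalfTerm_le {m k : ℕ} (hk : k ≤ m) :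
    binomHalfTerm m k ≤ 1 / √(3 * m + 1) * exp (-(k * (k - 1)) / (4 * m)) := by
  have h := le_mul_exp_of_succ_le_mul_exp (fun j hj => binomHalfTerm_succ_le hj) k hk
  rw [← mul_assoc, show (2 : ℝ) * 2 = 4 by norm_num] at h
  exact h.trans (by gcongr; exact binomHalfTerm_zero_le m)

theorem stmt0 :
    ∃ C : ℝ, 0 < C ∧ ∀ m k : ℕ, 1 ≤ m → k ≤ m →
      ((2 * m - k).factorial : ℝ) / (2 ^ (2 * m - k) * m.factorial * (m - k).factorial)
        ≤ C * Real.exp (-(k : ℝ) ^ 2 / (4 * (2 * (m : ℝ) - k))) /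
            Real.sqrt (2 * (m : ℝ) - k) := by
  refine ⟨exp 1, exp_pos 1, fun m k hm hk => ?_⟩
  have hm' : (1 : ℝ) ≤ m := by exact_mod_cast hm
  have hk' : (k : ℝ) ≤ m := by exact_mod_cast hk
  have hexponent : -(k * (k - 1)) / (4 * m) ≤ 1 + -(k : ℝ) ^ 2 / (4 * (2 * m - k)) := by
    have hsq : (k : ℝ) ^ 2 / (4 * (2 * m - k)) ≤ k ^ 2 / (4 * m) :=
      div_le_div_of_nonneg_left (by positivity) (by positivity) (by linarith)
    have hlin : (k : ℝ) / (4 * m) ≤ 1 := (div_le_one (by positivity)).mpr (by linarith)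
    calc -(k * (k - 1)) / (4 * m) = -((k : ℝ) ^ 2 / (4 * m)) + k / (4 * m) := by ring
      _ ≤ 1 + -(k : ℝ) ^ 2 / (4 * (2 * m - k)) := by rw [neg_div]; linarith
  calc binomHalfTerm m k ≤ 1 / √(3 * m + 1) * exp (-(k * (k - 1)) / (4 * m)) :=
        binomHalfTerm_le hk
    _ ≤ 1 / √(2 * m - k) * (exp 1 * exp (-(k : ℝ) ^ 2 / (4 * (2 * m - k)))) := by
        rw [← exp_add]
        gcongr
        · exact sqrt_pos.mpr (by linarith)
        · linarith
    _ = exp 1 * exp (-(k : ℝ) ^ 2 / (4 * (2 * m - k))) / √(2 * m - k) := by ring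
end

section
/- Let c_{m,k} be defined by the recurrences c_{1,0} = c_{1,1} = 1, c_{m,m} = c_{m-1,m-1}, c_{m,m-1} = (1/2)c_{m-1,m-1} + c_{m-1,m-2}, c_{m,m-k} = Σ_{l=0}^{k} 2^{-(k-l)} c_{m-1,m-1-l} for 2 ≤ k ≤ m-1, and c_{m,0} = Σ_{l=0}^{m-1} c_{m-1,l}/2^l. Then for all m ≥ 1 and 0 ≤ k ≤ m, c_{m,k} = (2m-k)!/(2^{m-k} · m! · (m-k)!). -/
/-!
Writing `j = m - k`, the claim is `c m (m - j) = (m + j).choose m / 2 ^ j`. The recurrences for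
`k = m`, `k = m - 1` and `2 ≤ m - k ≤ m - 1` are the single rule
`c (m+1) (m+1-j) = ∑_{l ≤ j} 2^{-(j-l)} c m (m-l)` for `j ≤ m`, and on the closed form the weights
`2^{-(j-l)} 2^{-l}` all equal `2^{-j}`, so the step is the hockey-stick identity. The recurrence
for `c m 0`, read backwards, is the same sum with `j = m`, followed by
`(2m+2).choose (m+1) = 2 (2m+1).choose (m+1)`.
-/

open Finset

lemma sum_range_half_pow_mul_choose_div (m j : ℕ) :
    ∑ l ∈ range (j + 1), (1 / 2 : ℝ) ^ (j - l) * ((m + l).choose m / 2 ^ l)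
      = ((m + 1 + j).choose (m + 1) : ℝ) / 2 ^ j := by
  have hterm : ∀ l ∈ range (j + 1),
      (1 / 2 : ℝ) ^ (j - l) * ((m + l).choose m / 2 ^ l) = ((l + m).choose m : ℝ) / 2 ^ j := by
    intro l hl
    rw [one_div_pow, div_mul_div_comm, one_mul, ← pow_add, add_comm m l,
      Nat.sub_add_cancel (mem_range_succ_iff.mp hl)]
  rw [sum_congr rfl hterm, ← sum_div, ← Nat.cast_sum, Nat.sum_range_add_choose]
  ring_nf

lemma choose_two_mul_add_two (m : ℕ) :
    (2 * m + 2).choose (m + 1) = 2 * (2 * m + 1).choose (m + 1) := by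
  rw [Nat.choose_succ_succ, Nat.choose_symm_half]
  ring

section Recurrence

variable {c : ℕ → ℕ → ℝ}

lemma eq_weighted_sum_of_recurrences
    (hdiag : ∀ m, 2 ≤ m → c m m = c (m - 1) (m - 1))
    (hsub : ∀ m, 2 ≤ m → c m (m - 1) = (1 / 2) * c (m - 1) (m - 1) + c (m - 1) (m - 2))
    (hmid : ∀ m k, 2 ≤ k → k ≤ m - 1 →
      c m (m - k) = ∑ l ∈ range (k + 1), (1 / 2 : ℝ) ^ (k - l) * c (m - 1) (m - 1 - l))
    (m j : ℕ) (hm : 1 ≤ m) (hj : j ≤ m) :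
    c (m + 1) (m + 1 - j) = ∑ l ∈ range (j + 1), (1 / 2 : ℝ) ^ (j - l) * c m (m - l) := by
  match j with
  | 0 => simpa using hdiag (m + 1) (by omega)
  | 1 =>
    have h := hsub (m + 1) (by omega)
    rw [show m + 1 - 2 = m - 1 by omega] at h
    simpa [sum_range_succ] using h
  | j + 2 => simpa using hmid (m + 1) (j + 2) (by omega) (by omega)

lemma eq_choose_div_two_pow_of_recurrences (h10 : c 1 0 = 1) (h11 : c 1 1 = 1)
    (hrec : ∀ m j, 1 ≤ m → j ≤ m →
      c (m + 1) (m + 1 - j) = ∑ l ∈ range (j + 1), (1 / 2 : ℝ) ^ (j - l) * c m (m - l))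
    (h0 : ∀ m, 2 ≤ m → c m 0 = ∑ l ∈ range m, c (m - 1) l / 2 ^ l)
    {m : ℕ} (hm : 1 ≤ m) : ∀ j ≤ m, c m (m - j) = ((m + j).choose m : ℝ) / 2 ^ j := by
  induction m, hm using Nat.le_induction with
  | base =>
    intro j hj
    interval_cases j <;> simp [h10, h11]
  | succ m hm ih =>
    intro j hj
    rcases hj.lt_or_eq with hj | rfl
    · rw [hrec m j hm (by omega), ← sum_range_half_pow_mul_choose_div]
      refine sum_congr rfl fun l hl => ?_
      rw [ih l ((mem_range_succ_iff.mp hl).trans (by omega))]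
    · have hreflect : c (m + 1) 0 = ∑ l ∈ range (m + 1), (1 / 2 : ℝ) ^ (m - l) * c m (m - l) := by
        rw [h0 (m + 1) (by omega), ← sum_range_reflect]
        refine sum_congr rfl fun l _ => ?_
        rw [Nat.add_sub_cancel, one_div_pow, one_div_mul_eq_div]
      rw [Nat.sub_self, hreflect]
      calc ∑ l ∈ range (m + 1), (1 / 2 : ℝ) ^ (m - l) * c m (m - l)
          = ((2 * m + 1).choose (m + 1) : ℝ) / 2 ^ m := by
            rw [show 2 * m + 1 = m + 1 + m by ring, ← sum_range_half_pow_mul_choose_div]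
            refine sum_congr rfl fun l hl => ?_
            rw [ih l (mem_range_succ_iff.mp hl)]
        _ = ((m + 1 + (m + 1)).choose (m + 1) : ℝ) / 2 ^ (m + 1) := by
            rw [show m + 1 + (m + 1) = 2 * m + 2 by ring, choose_two_mul_add_two, pow_succ]
            push_cast
            field_simp

end Recurrence

theorem stmt1 (c : ℕ → ℕ → ℝ)
    (h10 : c 1 0 = 1) (h11 : c 1 1 = 1)
    (hdiag : ∀ m, 2 ≤ m → c m m = c (m - 1) (m - 1))
    (hsub : ∀ m, 2 ≤ m → c m (m - 1) = (1 / 2) * c (m - 1) (m - 1) + c (m - 1) (m - 2))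
    (hmid : ∀ m k, 2 ≤ k → k ≤ m - 1 →
      c m (m - k) = ∑ l ∈ Finset.range (k + 1), (1 / 2 : ℝ) ^ (k - l) * c (m - 1) (m - 1 - l))
    (h0 : ∀ m, 2 ≤ m → c m 0 = ∑ l ∈ Finset.range m, c (m - 1) l / 2 ^ l) :
    ∀ m k, 1 ≤ m → k ≤ m →
      c m k = ((2 * m - k).factorial : ℝ) / (2 ^ (m - k) * m.factorial * (m - k).factorial) := by
  intro m k hm hk
  have h := eq_choose_div_two_pow_of_recurrences h10 h11
    (eq_weighted_sum_of_recurrences hdiag hsub hmid) h0 hm (m - k) (Nat.sub_le m k)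
  rw [Nat.sub_sub_self hk, Nat.cast_add_choose, show m + (m - k) = 2 * m - k by omega] at h
  rw [h]
  field_simp
end

section
/- Let d_{m,k} be defined by d_{m,m} = 1 for all m ≥ 1, d_{2,1} = 1, d_{m,m-1} = Σ_{l=1}^{m-1} d_{l,l} = m-1, d_{m,m-k} = Σ_{l=1}^{k+1} d_{m-1,m-l} for 2 ≤ k ≤ m-2, and d_{m,1} = Σ_{l=1}^{m-1} d_{m-1,l}. Then for all m ≥ 1 and 1 ≤ k ≤ m, d_{m,k} = (k/(2m-k)) · (2m-k)!/(m! · (m-k)!). -/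
/-!
The closed form `ballot m k = k / (2m - k) · (2m - k)! / (m! (m - k)!)` (the Catalan triangle)
satisfies the Pascal-type recurrence `ballot m j = ballot m (j + 1) + ballot (m - 1) (j - 1)`.
Summing it telescopically along a row gives exactly the sums defining `d`, so `d = ballot` by
strong induction on `m`.
-/

open Finset

noncomputable def ballot (m k : ℕ) : ℝ :=
  ((k : ℝ) / (2 * (m : ℝ) - k)) * ((2 * m - k).factorial : ℝ) /
    (m.factorial * (m - k).factorial)

@[simp]
lemma ballot_zero_right (m : ℕ) : ballot m 0 = 0 := by
  simp [ballot]

lemma ballot_of_le {m k : ℕ} (h : k ≤ m) :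
    ballot m k = ((k : ℝ) / ((2 * m - k : ℕ) : ℝ)) * ((2 * m - k).factorial : ℝ) /
      (m.factorial * (m - k).factorial) := by
  rw [ballot, Nat.cast_sub (by omega)]
  push_cast
  rfl

lemma ballot_self {m : ℕ} (hm : 1 ≤ m) : ballot m m = 1 := by
  have hm' : (m : ℝ) ≠ 0 := by positivity
  simp only [ballot_of_le le_rfl, show 2 * m - m = m by omega, Nat.sub_self, Nat.factorial_zero]
  field_simp
  ring

lemma ballot_succ_self (n : ℕ) : ballot (n + 1) n = n := by
  simp only [ballot_of_le (Nat.le_succ n), show 2 * (n + 1) - n = n + 2 by omega,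
    show n + 1 - n = 1 by omega, Nat.factorial_one, Nat.factorial_succ (n + 1)]
  push_cast
  field_simp
  ring

lemma ballot_eq_add {m j : ℕ} (hj : 1 ≤ j) (hjm : j < m) :
    ballot m j = ballot m (j + 1) + ballot (m - 1) (j - 1) := by
  obtain ⟨i, rfl⟩ : ∃ i, j = i + 1 := ⟨j - 1, by omega⟩
  obtain ⟨b, rfl⟩ : ∃ b, m = i + b + 2 := ⟨m - i - 2, by omega⟩
  rw [show i + 1 + 1 = i + 2 from rfl, show i + 1 - 1 = i by omega,
    show i + b + 2 - 1 = i + b + 1 by omega]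
  simp only [ballot_of_le (show i + 1 ≤ i + b + 2 by omega),
    ballot_of_le (show i + 2 ≤ i + b + 2 by omega), ballot_of_le (show i ≤ i + b + 1 by omega),
    show 2 * (i + b + 2) - (i + 1) = (i + 2 * b + 2) + 1 by omega,
    show i + b + 2 - (i + 1) = b + 1 by omega,
    show 2 * (i + b + 2) - (i + 2) = i + 2 * b + 2 by omega,
    show i + b + 2 - (i + 2) = b by omega,
    show 2 * (i + b + 1) - i = i + 2 * b + 2 by omega,
    show i + b + 1 - i = b + 1 by omega,
    Nat.factorial_succ (i + 2 * b + 2), Nat.factorial_succ (i + b + 1), Nat.factorial_succ b]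
  push_cast
  field_simp
  ring

lemma sum_Icc_ballot_pred {m t : ℕ} (hm : 2 ≤ m) (ht : t ≤ m - 1) :
    ∑ l ∈ Icc 1 (t + 1), ballot (m - 1) (m - l) = ballot m (m - t) := by
  induction t with
  | zero => simp [ballot_self (show 1 ≤ m - 1 by omega), ballot_self (show 1 ≤ m by omega)]
  | succ t ih =>
    rw [sum_Icc_succ_top (by omega), ih (by omega),
      ballot_eq_add (j := m - (t + 1)) (by omega) (by omega),
      show m - (t + 1) + 1 = m - t by omega, show m - (t + 1) - 1 = m - (t + 1 + 1) by omega]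

lemma sum_Icc_ballot {m : ℕ} (hm : 2 ≤ m) :
    ∑ l ∈ Icc 1 (m - 1), ballot (m - 1) l = ballot m 1 := by
  calc ∑ l ∈ Icc 1 (m - 1), ballot (m - 1) l
      = ∑ l ∈ Icc 1 (m - 1), ballot (m - 1) (m - l) :=
        sum_nbij' (m - ·) (m - ·) (by simp; omega) (by simp; omega) (by simp; omega)
          (by simp; omega) (fun l hl => by simp at hl; rw [Nat.sub_sub_self (by omega)])
    _ = ∑ l ∈ Icc 1 (m - 1 + 1), ballot (m - 1) (m - l) := by
        rw [sum_Icc_succ_top (by omega), Nat.sub_add_cancel (by omega), Nat.sub_self,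
          ballot_zero_right, add_zero]
    _ = ballot m 1 := by
        rw [sum_Icc_ballot_pred hm le_rfl, Nat.sub_sub_self (by omega)]

theorem stmt2_general (d : ℕ → ℕ → ℝ)
    (hdiag : ∀ m, 1 ≤ m → d m m = 1)
    (hsub : ∀ m, 2 ≤ m → d m (m - 1) = ∑ l ∈ Finset.Icc 1 (m - 1), d l l)
    (hmid : ∀ m k, 2 ≤ k → k ≤ m - 2 →
      d m (m - k) = ∑ l ∈ Finset.Icc 1 (k + 1), d (m - 1) (m - l))
    (h1 : ∀ m, 2 ≤ m → d m 1 = ∑ l ∈ Finset.Icc 1 (m - 1), d (m - 1) l) :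
    ∀ m k, 1 ≤ k → k ≤ m →
      d m k = ((k : ℝ) / (2 * (m : ℝ) - k)) * ((2 * m - k).factorial : ℝ) /
        (m.factorial * (m - k).factorial) := by
  intro m
  induction m using Nat.strong_induction_on with
  | _ m ih =>
    intro k hk hkm
    change d m k = ballot m k
    have hprev : ∀ j ∈ Icc 1 (m - 1), d (m - 1) j = ballot (m - 1) j := fun j hj =>
      ih (m - 1) (by simp at hj; omega) j (mem_Icc.1 hj).1 (mem_Icc.1 hj).2
    obtain rfl | ⟨rfl, hm⟩ | ⟨rfl, hm⟩ | hk_mid :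
        k = m ∨ (k = m - 1 ∧ 2 ≤ m) ∨ (k = 1 ∧ 3 ≤ m) ∨ 2 ≤ k ∧ k ≤ m - 2 := by
      omega
    · rw [hdiag k hk, ballot_self hk]
    · obtain ⟨n, rfl⟩ : ∃ n, m = n + 1 := ⟨m - 1, by omega⟩
      rw [hsub _ hm, sum_congr rfl fun l hl => hdiag l (mem_Icc.1 hl).1]
      simp [ballot_succ_self]
    · rw [h1 m (by omega), sum_congr rfl hprev, sum_Icc_ballot (by omega)]
    · rw [← Nat.sub_sub_self hkm, hmid m (m - k) (by omega) (by omega),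
        ← sum_Icc_ballot_pred (by omega) (by omega)]
      refine sum_congr rfl fun l hl => hprev (m - l) ?_
      simp at hl ⊢
      omega

theorem stmt2 (d : ℕ → ℕ → ℝ)
    (hdiag : ∀ m, 1 ≤ m → d m m = 1)
    (h21 : d 2 1 = 1)
    (hsub : ∀ m, 2 ≤ m → d m (m - 1) = ∑ l ∈ Finset.Icc 1 (m - 1), d l l)
    (hmid : ∀ m k, 2 ≤ k → k ≤ m - 2 →
      d m (m - k) = ∑ l ∈ Finset.Icc 1 (k + 1), d (m - 1) (m - l))
    (h1 : ∀ m, 2 ≤ m → d m 1 = ∑ l ∈ Finset.Icc 1 (m - 1), d (m - 1) l) :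
    ∀ m k, 1 ≤ k → k ≤ m →
      d m k = ((k : ℝ) / (2 * (m : ℝ) - k)) * ((2 * m - k).factorial : ℝ) /
        (m.factorial * (m - k).factorial) :=
  stmt2_general d hdiag hsub hmid h1
end

section
/- For all z > 0 and all x ∈ [0,1], cosh(z(1-x))·sinh(2z) - sinh(z(1+x)) ≤ sinh(z(1-x))·sinh(2z) + (1/2)e^{-z}. -/
open Real

theorem exp_neg_mul_sinh_sub_sinh_sub_le (a b : ℝ) :
    exp (-a) * sinh b - sinh (b - a) ≤ exp (a - b) / 2 := by
  have hexp : exp (-a) * sinh b - sinh (b - a) = (exp (a - b) - exp (-(a + b))) / 2 := by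
    rw [sinh_eq, sinh_eq, mul_div_assoc', mul_sub, ← exp_add, ← exp_add]
    ring_nf
  rw [hexp]
  linarith [exp_pos (-(a + b))]

theorem stmt8_general (z x : ℝ) (hz : 0 < z) (hx0 : 0 ≤ x) :
    Real.cosh (z * (1 - x)) * Real.sinh (2 * z) - Real.sinh (z * (1 + x))
      ≤ Real.sinh (z * (1 - x)) * Real.sinh (2 * z) + (1 / 2) * Real.exp (-z) := by
  have hdecay : exp (z * (1 - x) - 2 * z) ≤ exp (-z) :=
    exp_le_exp.2 (by nlinarith)
  have hkey := exp_neg_mul_sinh_sub_sinh_sub_le (z * (1 - x)) (2 * z)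
  rw [← cosh_sub_sinh, show 2 * z - z * (1 - x) = z * (1 + x) by ring] at hkey
  linarith

theorem stmt8 (z x : ℝ) (hz : 0 < z) (hx0 : 0 ≤ x) (hx1 : x ≤ 1) :
    Real.cosh (z * (1 - x)) * Real.sinh (2 * z) - Real.sinh (z * (1 + x))
      ≤ Real.sinh (z * (1 - x)) * Real.sinh (2 * z) + (1 / 2) * Real.exp (-z) :=
  stmt8_general z x hz hx0
end

section
/- Let z > 0, x ∈ ℝ, and for a nonnegative integer k define K_k = ∫_x^1 (z y)^k cosh(2z(1-y)) dy. Then for every k ≥ 2, K_k = (k!/(2z)) · ( P_{1,k} sinh(2z(1-x)) + P_{2,k} cosh(2z(1-x)) - P_{0,k} ), where P_{0,k} = Σ_{l odd, 0≤l≤k} z^{k-l}/(2^l (k-l)!), P_{1,k} = Σ_{l even, 0≤l≤k} (zx)^{k-l}/(2^l (k-l)!), and P_{2,k} = Σ_{l odd, 0≤l≤k} (zx)^{k-l}/(2^l (k-l)!). -/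
/-!
With `E k u = ∑_{l ≤ k even} u ^ (k - l) / (2 ^ l (k - l)!)` and `O k u` the same sum over
odd `l`, shifting the summation index gives `E' = 2 O` and `O' = 2 E - 2 u ^ k / k!`. Hence in the
derivative of `E (z t) sinh (2z(1-t)) + O (z t) cosh (2z(1-t))` everything cancels except
`-2z (z t) ^ k / k! · cosh (2z(1-t))`, so `-k!/(2z)` times this expression is a primitive of the
integrand, and the closed form is the fundamental theorem of calculus.
-/

open Finset

lemma hasDerivAt_pow_div_factorial_succ (n : ℕ) (u : ℝ) :
    HasDerivAt (fun v : ℝ => v ^ (n + 1) / (n + 1).factorial) (u ^ n / n.factorial) u := by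
  refine ((hasDerivAt_pow (n + 1) u).div_const _).congr_deriv ?_
  rw [Nat.add_sub_cancel, Nat.factorial_succ]
  push_cast
  field_simp

/-- With `p = Even` this is `P₁` (at `u = z x`); with `p = Odd` it is `P₂` (at `u = z x`) and
`P₀` (at `u = z`). -/
noncomputable def halfPowSum (p : ℕ → Prop) [DecidablePred p] (k : ℕ) (u : ℝ) : ℝ :=
  ∑ l ∈ (range (k + 1)).filter p, u ^ (k - l) / (2 ^ l * (k - l).factorial)

section

variable (p : ℕ → Prop) [DecidablePred p]

lemma hasDerivAt_halfPowSum_succ (k : ℕ) (u : ℝ) :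
    HasDerivAt (halfPowSum p (k + 1)) (halfPowSum p k u) u := by
  unfold halfPowSum
  simp only [sum_filter, sum_range_succ _ (k + 1)]
  rw [← add_zero (∑ l ∈ range (k + 1), _)]
  refine .add (.fun_sum fun l hl => ?_) ?_
  · have hl : l ≤ k := Nat.lt_succ_iff.mp (mem_range.mp hl)
    split_ifs
    · simp only [show k + 1 - l = k - l + 1 by omega, div_mul_eq_div_div_swap]
      exact (hasDerivAt_pow_div_factorial_succ (k - l) u).div_const _
    · exact hasDerivAt_const u 0
  · simpa using hasDerivAt_const u _

lemma halfPowSum_zero (u : ℝ) : halfPowSum p 0 u = if p 0 then 1 else 0 := by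
  simp [halfPowSum, sum_filter]

lemma two_mul_halfPowSum_succ (q : ℕ → Prop) [DecidablePred q] (hqp : ∀ l, q l ↔ p (l + 1))
    (k : ℕ) (u : ℝ) :
    2 * halfPowSum p (k + 1) u
      = halfPowSum q k u + 2 * if p 0 then u ^ (k + 1) / (k + 1).factorial else 0 := by
  unfold halfPowSum
  simp only [sum_filter, mul_sum, hqp]
  rw [sum_range_succ']
  congr 1
  · refine sum_congr rfl fun l hl => ?_
    have hl : l ≤ k := Nat.lt_succ_iff.mp (mem_range.mp hl)
    split_ifs
    · rw [show k + 1 - (l + 1) = k - l by omega, pow_succ]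
      field_simp
    · simp
  · split_ifs <;> simp

end

lemma two_mul_halfPowSum_odd_succ (k : ℕ) (u : ℝ) :
    2 * halfPowSum Odd (k + 1) u = halfPowSum Even k u := by
  simpa using two_mul_halfPowSum_succ Odd Even (fun l => by simp [Nat.odd_add_one]) k u

lemma two_mul_halfPowSum_even_succ (k : ℕ) (u : ℝ) :
    2 * halfPowSum Even (k + 1) u
      = halfPowSum Odd k u + 2 * (u ^ (k + 1) / (k + 1).factorial) := by
  simpa using two_mul_halfPowSum_succ Even Odd (fun l => by simp [Nat.even_add_one]) k u

lemma hasDerivAt_halfPowSum_even (k : ℕ) (u : ℝ) :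
    HasDerivAt (halfPowSum Even k) (2 * halfPowSum Odd k u) u := by
  cases k with
  | zero => simpa [funext (halfPowSum_zero _)] using hasDerivAt_const u (1 : ℝ)
  | succ k => simpa [two_mul_halfPowSum_odd_succ] using hasDerivAt_halfPowSum_succ Even k u

lemma hasDerivAt_halfPowSum_odd (k : ℕ) (u : ℝ) :
    HasDerivAt (halfPowSum Odd k) (2 * (halfPowSum Even k u - u ^ k / k.factorial)) u := by
  cases k with
  | zero => simpa [funext (halfPowSum_zero _), halfPowSum_zero] using hasDerivAt_const u (0 : ℝ)
  | succ k =>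
    convert hasDerivAt_halfPowSum_succ Odd k u using 1
    rw [mul_sub, two_mul_halfPowSum_even_succ]
    ring

open Real in
lemma hasDerivAt_coshMoment_primitive {z : ℝ} (hz : z ≠ 0) (k : ℕ) (t : ℝ) :
    HasDerivAt (fun s => -(k.factorial / (2 * z)) *
        (halfPowSum Even k (z * s) * sinh (2 * z * (1 - s))
          + halfPowSum Odd k (z * s) * cosh (2 * z * (1 - s))))
      ((z * t) ^ k * cosh (2 * z * (1 - t))) t := by
  have hzt : HasDerivAt (fun s => z * s) z t := by simpa using (hasDerivAt_id t).const_mul z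
  have hw : HasDerivAt (fun s => 2 * z * (1 - s)) (-(2 * z)) t := by
    simpa using ((hasDerivAt_id t).const_sub 1).const_mul (2 * z)
  have hE := (hasDerivAt_halfPowSum_even k (z * t)).comp t hzt
  have hO := (hasDerivAt_halfPowSum_odd k (z * t)).comp t hzt
  refine (((hE.mul hw.sinh).add (hO.mul hw.cosh)).const_mul _).congr_deriv ?_
  have hfact : (k.factorial : ℝ) ≠ 0 := Nat.cast_ne_zero.mpr k.factorial_ne_zero
  simp only [Function.comp_def]
  field_simp
  ring

theorem stmt16_general (z x : ℝ) (hz : 0 < z) (k : ℕ) :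
    (∫ y in x..1, (z * y) ^ k * Real.cosh (2 * z * (1 - y)))
      = (k.factorial : ℝ) / (2 * z) *
        ((∑ l ∈ (Finset.range (k + 1)).filter (fun l => Even l),
            (z * x) ^ (k - l) / (2 ^ l * (k - l).factorial)) * Real.sinh (2 * z * (1 - x))
        + (∑ l ∈ (Finset.range (k + 1)).filter (fun l => Odd l),
            (z * x) ^ (k - l) / (2 ^ l * (k - l).factorial)) * Real.cosh (2 * z * (1 - x))
        - (∑ l ∈ (Finset.range (k + 1)).filter (fun l => Odd l),
            z ^ (k - l) / (2 ^ l * (k - l).factorial))) := by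
  have hint : Continuous fun y => (z * y) ^ k * Real.cosh (2 * z * (1 - y)) := by fun_prop
  rw [intervalIntegral.integral_eq_sub_of_hasDerivAt
    (fun t _ => hasDerivAt_coshMoment_primitive hz.ne' k t) (hint.intervalIntegrable _ _)]
  simp only [halfPowSum, sub_self, mul_zero, Real.sinh_zero, Real.cosh_zero, mul_one]
  ring

theorem stmt16 (z x : ℝ) (hz : 0 < z) (k : ℕ) (hk : 2 ≤ k) :
    (∫ y in x..1, (z * y) ^ k * Real.cosh (2 * z * (1 - y)))
      = (k.factorial : ℝ) / (2 * z) *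
        ((∑ l ∈ (Finset.range (k + 1)).filter (fun l => Even l),
            (z * x) ^ (k - l) / (2 ^ l * (k - l).factorial)) * Real.sinh (2 * z * (1 - x))
        + (∑ l ∈ (Finset.range (k + 1)).filter (fun l => Odd l),
            (z * x) ^ (k - l) / (2 ^ l * (k - l).factorial)) * Real.cosh (2 * z * (1 - x))
        - (∑ l ∈ (Finset.range (k + 1)).filter (fun l => Odd l),
            z ^ (k - l) / (2 ^ l * (k - l).factorial))) :=
  stmt16_general z x hz k
end
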